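/- arXiv:1511.07733 — 5 statements merged into one kernel-verified Lean document; each statement's English description precedes it below -/
import Mathlib

section
/- Let λ > 0 and let u(x, y) = λ · Im √(x + iy) (principal square root) on the slit plane ℝ² \ {(x, 0) : x ≤ 0}. Then for every r > 0 the Dirichlet energy of u on the slit disc satisfies ∫_{B_r \ {(x,0): x ≤ 0}} ‖∇u‖² dx dy = λ² π r / 2, where B_r is the open disc of radius r centered at the origin. Consequently, for every r ∈ (0, 1] the Dirichlet energy term λ²πr/2 equals the crack-length term λ²(π/2)·𝓗¹(Γ₀ ∩ B_r), where Γ₀ = {(x, 0) : −1 ≤ x ≤ 0} and 𝓗¹ is the 1-dimensional Hausdorff measure. -/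
/-!
On the slit plane `√` is holomorphic with derivative `1 / (2√z)`, and the gradient of the
imaginary part of a holomorphic `f` is `i · conj f'`; hence `‖∇u‖² = λ² / (4|z|)`. The slit is
Lebesgue-null, and in polar coordinates `∫_{B_r} |z|⁻¹ = 2πr`, which gives the energy `λ²πr/2`.
For `r ≤ 1` the crack `Γ₀ ∩ B_r` is the segment `(-r, 0]`, of length `r`.
-/

open MeasureTheory Complex ComplexConjugate Metric Set

theorem HasDerivAt.hasGradientAt_im {f : ℂ → ℂ} {d z : ℂ} (hf : HasDerivAt f d z) :
    HasGradientAt (fun w => (f w).im) (I * conj d) z := by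
  have hdual : InnerProductSpace.toDual ℝ ℂ (I * conj d) =
      imCLM.comp ((ContinuousLinearMap.toSpanSingleton ℂ d).restrictScalars ℝ) := by
    ext h
    simp [Complex.inner, mul_re, mul_im]
    ring
  rw [hasGradientAt_iff_hasFDerivAt, hdual]
  exact imCLM.hasFDerivAt.comp z (hf.hasFDerivAt.restrictScalars ℝ)

theorem norm_gradient_const_mul_im_cpow_half_sq (c : ℝ) {z : ℂ} (hz : z ∈ slitPlane) :
    ‖gradient (fun w : ℂ => c * (w ^ (1 / 2 : ℂ)).im) z‖ ^ 2 = c ^ 2 / 4 * ‖z‖⁻¹ := by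
  have hu : (fun w : ℂ => c * (w ^ (1 / 2 : ℂ)).im) = fun w => ((c : ℂ) * w ^ (1 / 2 : ℂ)).im := by
    funext w
    rw [im_ofReal_mul]
  have hexp : (1 / 2 - 1 : ℂ) = ((-(1 / 2) : ℝ) : ℂ) := by norm_num
  rw [hu, ((hasStrictDerivAt_cpow_const hz).hasDerivAt.const_mul (c : ℂ)).hasGradientAt_im.gradient]
  simp only [norm_mul, norm_I, norm_conj, norm_real, Real.norm_eq_abs, hexp, norm_cpow_real,
    one_mul]
  rw [mul_pow, mul_pow, sq_abs, ← Real.rpow_natCast (‖z‖ ^ _), ← Real.rpow_mul (norm_nonneg z)]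
  norm_num [Real.rpow_neg_one]
  ring

theorem Complex.compl_slitPlane : slitPlaneᶜ = {z : ℂ | z.im = 0 ∧ z.re ≤ 0} := by
  ext z
  simp [mem_slitPlane_iff, and_comm]

theorem Complex.slitPlane_ae_eq_univ : slitPlane =ᵐ[volume] (univ : Set ℂ) :=
  volume_preserving_equiv_real_prod.quasiMeasurePreserving.preimage_ae_eq
    polarCoord_source_ae_eq_univ

theorem Complex.integral_ball_inv_norm {r : ℝ} (hr : 0 ≤ r) :
    ∫ z in ball (0 : ℂ) r, ‖z‖⁻¹ = 2 * Real.pi * r := by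
  have hradial : (ball (0 : ℂ) r).indicator (fun z => ‖z‖⁻¹) =
      fun z => (Iio r).indicator (fun t : ℝ => t⁻¹) ‖z‖ := by
    funext z
    simp [indicator]
  have hpolar : EqOn (fun t : ℝ => t ^ (2 - 1) • (Iio r).indicator (fun t : ℝ => t⁻¹) t)
      ((Iio r).indicator 1) (Ioi 0) := fun t ht => by
    by_cases htr : t < r <;> simp [htr, (mem_Ioi.1 ht).ne']
  rw [← integral_indicator measurableSet_ball, hradial, integral_fun_norm_addHaar,
    finrank_real_complex, setIntegral_congr_fun measurableSet_Ioi hpolar,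
    integral_indicator_one measurableSet_Iio, measureReal_restrict_apply measurableSet_Iio,
    Iio_inter_Ioi]
  simp [measureReal_def, Complex.volume_ball, hr]
  ring

theorem integral_ball_inter_slitPlane_norm_gradient_sq (c : ℝ) {r : ℝ}
    (hr : 0 ≤ r) :
    ∫ z in ball (0 : ℂ) r ∩ slitPlane, ‖gradient (fun w : ℂ => c * (w ^ (1 / 2 : ℂ)).im) z‖ ^ 2 =
      c ^ 2 * Real.pi * r / 2 := by
  have hball : (ball (0 : ℂ) r ∩ slitPlane : Set ℂ) =ᵐ[volume] ball (0 : ℂ) r := by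
    simpa using (ae_eq_refl (ball (0 : ℂ) r)).inter slitPlane_ae_eq_univ
  rw [setIntegral_congr_fun (measurableSet_ball.inter isOpen_slitPlane.measurableSet)
      fun z hz => norm_gradient_const_mul_im_cpow_half_sq c hz.2,
    setIntegral_congr_set hball, integral_const_mul, integral_ball_inv_norm hr]
  ring

theorem Complex.hausdorffMeasure_one_image_ofReal (s : Set ℝ) :
    μH[1] (((↑) : ℝ → ℂ) '' s) = volume s := by
  rw [isometry_ofReal.hausdorffMeasure_image (Or.inl zero_le_one), hausdorffMeasure_real]

theorem Complex.setOf_im_eq_zero_and (p : ℝ → Prop) :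
    {z : ℂ | z.im = 0 ∧ p z.re} = ((↑) : ℝ → ℂ) '' {x | p x} := by
  ext z
  constructor
  · rintro ⟨him, hre⟩
    exact ⟨z.re, hre, Complex.ext (by simp) (by simp [him])⟩
  · rintro ⟨x, hx, rfl⟩
    simpa using hx

theorem crack_inter_ball_eq_image_Ioc {r : ℝ} (hr : r ∈ Ioc (0 : ℝ) 1) :
    {z : ℂ | z.im = 0 ∧ -1 ≤ z.re ∧ z.re ≤ 0} ∩ ball (0 : ℂ) r = ((↑) : ℝ → ℂ) '' Ioc (-r) 0 := by
  rw [setOf_im_eq_zero_and (fun x => -1 ≤ x ∧ x ≤ 0), ← image_inter_preimage,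
    ← ofReal_zero, isometry_ofReal.preimage_ball]
  congr 1
  ext x
  simp only [mem_inter_iff, mem_ofPred_eq, Real.ball_eq_Ioo, mem_Ioo, mem_Ioc]
  constructor
  · rintro ⟨⟨-, hx0⟩, hxr, -⟩
    exact ⟨by linarith, hx0⟩
  · rintro ⟨hxr, hx0⟩
    exact ⟨⟨by linarith [hr.2], hx0⟩, by linarith, by linarith [hr.1]⟩

theorem dirichlet_energy_sqrt_slit_disc_general (lam : ℝ) :
    let u : ℂ → ℝ := fun z => lam * ((z ^ ((1 : ℂ)/2)).im)
    let slit : Set ℂ := {z | z.im = 0 ∧ z.re ≤ 0}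
    let Γ₀ : Set ℂ := {z | z.im = 0 ∧ -1 ≤ z.re ∧ z.re ≤ 0}
    (∀ r : ℝ, 0 < r →
      ∫ z in (Metric.ball (0 : ℂ) r \ slit), ‖gradient u z‖ ^ 2 ∂volume =
        lam ^ 2 * Real.pi * r / 2) ∧
    (∀ r : ℝ, r ∈ Set.Ioc (0 : ℝ) 1 →
      lam ^ 2 * Real.pi * r / 2 =
        lam ^ 2 * (Real.pi / 2) * (μH[1] (Γ₀ ∩ Metric.ball (0 : ℂ) r)).toReal) := by
  intro u slit Γ₀
  refine ⟨fun r hr => ?_, fun r hr => ?_⟩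
  · rw [show slit = slitPlaneᶜ from compl_slitPlane.symm, sdiff_compl]
    exact integral_ball_inter_slitPlane_norm_gradient_sq lam hr.le
  · rw [crack_inter_ball_eq_image_Ioc hr, hausdorffMeasure_one_image_ofReal, Real.volume_Ioc,
      sub_neg_eq_add, zero_add, ENNReal.toReal_ofReal hr.1.le]
    ring

/-- Let `λ > 0` and `u(z) = λ · Im √z` (principal square root) on the slit plane
`ℂ \ {z : Im z = 0, Re z ≤ 0}`. Then for every `r > 0` the Dirichlet energy of `u` on the
slit disc of radius `r` equals `λ²πr/2`; consequently, for every `r ∈ (0,1]` it equals the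
crack-length term `λ²(π/2)·𝓗¹(Γ₀ ∩ B_r)` where `Γ₀ = {(x,0) : −1 ≤ x ≤ 0}`. -/
theorem dirichlet_energy_sqrt_slit_disc (lam : ℝ) (hlam : 0 < lam) :
    let u : ℂ → ℝ := fun z => lam * ((z ^ ((1 : ℂ)/2)).im)
    let slit : Set ℂ := {z | z.im = 0 ∧ z.re ≤ 0}
    let Γ₀ : Set ℂ := {z | z.im = 0 ∧ -1 ≤ z.re ∧ z.re ≤ 0}
    (∀ r : ℝ, 0 < r →
      ∫ z in (Metric.ball (0 : ℂ) r \ slit), ‖gradient u z‖ ^ 2 ∂volume =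
        lam ^ 2 * Real.pi * r / 2) ∧
    (∀ r : ℝ, r ∈ Set.Ioc (0 : ℝ) 1 →
      lam ^ 2 * Real.pi * r / 2 =
        lam ^ 2 * (Real.pi / 2) * (μH[1] (Γ₀ ∩ Metric.ball (0 : ℂ) r)).toReal) :=
  dirichlet_energy_sqrt_slit_disc_general lam
end

section
/- For every integer k ≥ 1 there exists exactly one real number α in the open interval (k, k + 1/2) satisfying tan(πα) = (2/π) · α / (α² − 1/4). -/
open Real Set Filter Topology

private lemma tan_pi_shift (k : ℕ) (α : ℝ) :
    Real.tan (Real.pi * α) = Real.tan (Real.pi * (α - k)) := by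
  have h := (Real.tan_periodic.nat_mul k) (Real.pi * (α - k))
  rw [show Real.pi * α = Real.pi * (α - k) + (k : ℝ) * Real.pi by ring]
  exact h

private lemma g_anti {x y : ℝ} (hx : 1 ≤ x) (hxy : x < y) :
    y / (y ^ 2 - 1/4) < x / (x ^ 2 - 1/4) := by
  have hx2 : (0:ℝ) < x ^ 2 - 1/4 := by nlinarith
  have hy2 : (0:ℝ) < y ^ 2 - 1/4 := by nlinarith
  rw [div_lt_div_iff₀ hy2 hx2]
  nlinarith [mul_pos (sub_pos.mpr hxy) (show (0:ℝ) < x * y by nlinarith)]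

private lemma cos_ne_zero_of (k : ℕ) {α : ℝ}
    (h1 : (k : ℝ) ≤ α) (h2 : α < (k : ℝ) + 1/2) : Real.cos (Real.pi * α) ≠ 0 := by
  intro hc
  obtain ⟨n, hn⟩ := Real.cos_eq_zero_iff.mp hc
  have hpi := Real.pi_pos
  have hα : α = (n : ℝ) + 1/2 := by
    have h := hn
    field_simp at h
    nlinarith [h]
  have hlt : ((k:ℤ) - 1 : ℝ) < (n : ℝ) := by push_cast; linarith
  have hgt : (n : ℝ) < (k : ℝ) := by linarith
  have h1' : (k:ℤ) - 1 < n := by exact_mod_cast hlt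
  have h2' : n < (k:ℤ) := by exact_mod_cast hgt
  omega

/-- For every integer `k ≥ 1` there exists exactly one real `α ∈ (k, k + 1/2)` satisfying
`tan(πα) = (2/π) · α / (α² − 1/4)`. -/
theorem exists_unique_crack_exponent (k : ℕ) (hk : 1 ≤ k) :
    ∃! α : ℝ, α ∈ Set.Ioo (k : ℝ) ((k : ℝ) + 1/2) ∧
      Real.tan (Real.pi * α) = (2 / Real.pi) * (α / (α ^ 2 - 1/4)) := by
  have hpi := Real.pi_pos
  have hk1 : (1:ℝ) ≤ (k:ℝ) := by exact_mod_cast hk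
  set g : ℝ → ℝ := fun α => (2 / Real.pi) * (α / (α ^ 2 - 1/4)) with hg
  have hganti : ∀ x y : ℝ, 1 ≤ x → x < y → g y < g x := by
    intro x y hx hxy
    have h := g_anti hx hxy
    have h2p : (0:ℝ) < 2 / Real.pi := by positivity
    exact mul_lt_mul_of_pos_left h h2p
  have htan_mono : ∀ x y : ℝ, x ∈ Set.Ioo (k:ℝ) ((k:ℝ)+1/2) →
      y ∈ Set.Ioo (k:ℝ) ((k:ℝ)+1/2) → x < y →
      Real.tan (Real.pi * x) < Real.tan (Real.pi * y) := by
    intro x y hx hy hxy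
    rw [tan_pi_shift k x, tan_pi_shift k y]
    have hmem : ∀ z : ℝ, z ∈ Set.Ioo (k:ℝ) ((k:ℝ)+1/2) →
        Real.pi * (z - k) ∈ Set.Ioo (-(Real.pi/2)) (Real.pi/2) := by
      intro z hz
      exact ⟨by nlinarith [hz.1], by nlinarith [hz.2]⟩
    exact Real.strictMonoOn_tan (hmem x hx) (hmem y hy) (by nlinarith)
  set f : ℝ → ℝ := fun α => Real.tan (Real.pi * α) - g α with hf
  have hfcont : ∀ β : ℝ, β < (k:ℝ)+1/2 → ContinuousOn f (Set.Icc (k:ℝ) β) := by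
    intro β hβ
    apply ContinuousOn.sub
    · intro x hx
      apply ContinuousAt.continuousWithinAt
      have hc : Real.cos (Real.pi * x) ≠ 0 :=
        cos_ne_zero_of k hx.1 (lt_of_le_of_lt hx.2 hβ)
      exact (Real.continuousAt_tan.mpr hc).comp
        ((continuous_const.mul continuous_id).continuousAt)
    · apply ContinuousOn.mul continuousOn_const
      apply ContinuousOn.div continuousOn_id (by fun_prop)
      intro x hx
      have hx1 : (1:ℝ) ≤ x := le_trans hk1 hx.1
      nlinarith
  have hlim : Filter.Tendsto (fun α : ℝ => Real.tan (Real.pi * (α - k)))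
      (𝓝[<] ((k:ℝ)+1/2)) Filter.atTop := by
    apply Real.tendsto_tan_pi_div_two.comp
    apply tendsto_nhdsWithin_of_tendsto_nhds_of_eventually_within
    · have hc : Continuous (fun α : ℝ => Real.pi * (α - k)) := by fun_prop
      have h0 := hc.tendsto ((k:ℝ)+1/2)
      have he : Real.pi * (((k:ℝ)+1/2) - k) = Real.pi/2 := by ring
      rw [he] at h0
      exact h0.mono_left nhdsWithin_le_nhds
    · filter_upwards [self_mem_nhdsWithin] with x hx
      simp only [Set.mem_Iio] at hx ⊢
      nlinarith
  have hev1 : ∀ᶠ α in 𝓝[<] ((k:ℝ)+1/2), g k < Real.tan (Real.pi * (α - k)) :=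
    hlim.eventually (Filter.eventually_gt_atTop (g k))
  have hev2 : ∀ᶠ α in 𝓝[<] ((k:ℝ)+1/2), (k:ℝ) < α := by
    have : ∀ᶠ α in 𝓝 ((k:ℝ)+1/2), (k:ℝ) < α :=
      eventually_gt_nhds (by linarith)
    exact this.filter_mono nhdsWithin_le_nhds
  have hne : (𝓝[<] ((k:ℝ)+1/2)).NeBot := nhdsLT_neBot _
  obtain ⟨β, hβtan, hβk, hβlt⟩ := (hev1.and (hev2.and self_mem_nhdsWithin)).exists
  have hfk : f k < 0 := by
    have ht0 : Real.tan (Real.pi * (k:ℝ)) = 0 := by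
      rw [tan_pi_shift k (k:ℝ)]
      simp
    have hgk : 0 < g k := by
      have : (0:ℝ) < (k:ℝ) ^ 2 - 1/4 := by nlinarith
      simp only [hg]
      positivity
    simp only [hf, ht0]
    linarith
  have hfβ : 0 < f β := by
    have h1 : g β < g k := hganti (k:ℝ) β hk1 hβk
    have h2 : Real.tan (Real.pi * β) = Real.tan (Real.pi * (β - k)) := tan_pi_shift k β
    simp only [hf]
    rw [h2]
    linarith
  obtain ⟨α, hαmem, hα0⟩ := intermediate_value_Ioo (le_of_lt hβk) (hfcont β hβlt)
    (Set.mem_Ioo.mpr ⟨hfk, hfβ⟩)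
  have hαIoo : α ∈ Set.Ioo (k:ℝ) ((k:ℝ)+1/2) := ⟨hαmem.1, lt_trans hαmem.2 hβlt⟩
  have hαeq : Real.tan (Real.pi * α) = g α := by
    have := hα0
    simp only [hf] at this
    linarith
  refine ⟨α, ⟨hαIoo, hαeq⟩, ?_⟩
  rintro y ⟨hymem, hyeq⟩
  rcases lt_trichotomy y α with h | h | h
  · exfalso
    have ht := htan_mono y α hymem hαIoo h
    have hy1 : (1:ℝ) ≤ y := le_trans hk1 (le_of_lt hymem.1)
    have hgy := hganti y α hy1 h
    rw [hyeq, hαeq] at ht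
    exact absurd ht (not_lt.mpr (le_of_lt hgy))
  · exact h
  · exfalso
    have ht := htan_mono α y hαIoo hymem h
    have hα1 : (1:ℝ) ≤ α := le_trans hk1 (le_of_lt hαIoo.1)
    have hgy := hganti α y hα1 h
    rw [hyeq, hαeq] at ht
    exact absurd ht (not_lt.mpr (le_of_lt hgy))
end

section
/- The unique solution α₁ of the equation tan(πα) = (2/π) · α / (α² − 1/4) in the interval (1, 3/2) satisfies 1.18 < α₁ < 1.19. -/
open Real Set

noncomputable def crackF (a : ℝ) : ℝ :=
  Real.tan (Real.pi * (a - 1)) - (2 / Real.pi) * (a / (a ^ 2 - 1/4))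

lemma crackF_neg : crackF 1.18 < 0 := by
  have hpl : (3.141592:ℝ) < Real.pi := Real.pi_gt_d6
  have hph : Real.pi < 3.141593 := Real.pi_lt_d6
  have hpp : (0:ℝ) < Real.pi := Real.pi_pos
  have key : Real.tan (Real.pi * (1.18 - 1)) < (2 / Real.pi) * ((1.18:ℝ) / (1.18 ^ 2 - 1/4)) := by
    set x : ℝ := Real.pi * (1.18 - 1) with hxdef
    have hxlo : (0.56548656:ℝ) ≤ x := by rw [hxdef]; nlinarith
    have hxhi : x ≤ 0.56548674 := by rw [hxdef]; nlinarith
    have hx1 : |x| ≤ 1 := by rw [abs_of_nonneg (by linarith)]; linarith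
    have hs := abs_le.1 (Real.sin_bound hx1)
    have hc := abs_le.1 (Real.cos_bound hx1)
    rw [abs_of_nonneg (by linarith : (0:ℝ) ≤ x)] at hs hc
    have hsin : Real.sin x ≤ 0.5406746 := by
      nlinarith [hs.2, sq_nonneg x, sq_nonneg (x - 0.5654866), hxlo, hxhi]
    have hcos : (0.8347865:ℝ) ≤ Real.cos x := by
      nlinarith [hc.2, sq_nonneg x, sq_nonneg (x - 0.5654866), hxlo, hxhi]
    have hcpos : (0:ℝ) < Real.cos x := by linarith
    have h14 : ((1.18:ℝ) ^ 2 - 1/4) = 1.1424 := by norm_num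
    rw [h14, Real.tan_eq_sin_div_cos]
    have hrhs : (2 / Real.pi) * ((1.18:ℝ) / 1.1424) = 2.36 / (Real.pi * 1.1424) := by
      field_simp; ring
    rw [hrhs, div_lt_div_iff₀ hcpos (by positivity)]
    nlinarith
  simpa [crackF, sub_neg] using key

lemma crackF_pos : 0 < crackF 1.19 := by
  have hpl : (3.141592:ℝ) < Real.pi := Real.pi_gt_d6
  have hph : Real.pi < 3.141593 := Real.pi_lt_d6
  have hpp : (0:ℝ) < Real.pi := Real.pi_pos
  have key : (2 / Real.pi) * ((1.19:ℝ) / (1.19 ^ 2 - 1/4)) < Real.tan (Real.pi * (1.19 - 1)) := by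
    set x : ℝ := Real.pi * (1.19 - 1) with hxdef
    have hxlo : (0.59690248:ℝ) ≤ x := by rw [hxdef]; nlinarith
    have hxhi : x ≤ 0.59690267 := by rw [hxdef]; nlinarith
    have hx1 : |x| ≤ 1 := by rw [abs_of_nonneg (by linarith)]; linarith
    have hs := abs_le.1 (Real.sin_bound hx1)
    have hc := abs_le.1 (Real.cos_bound hx1)
    rw [abs_of_nonneg (by linarith : (0:ℝ) ≤ x)] at hs hc
    have hsin : (0.5548454:ℝ) ≤ Real.sin x := by
      nlinarith [hs.1, sq_nonneg x, sq_nonneg (x - 0.5969025), hxlo, hxhi]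
    have hcos : Real.cos x ≤ 0.8284655 := by
      nlinarith [hc.1, sq_nonneg x, sq_nonneg (x - 0.5969025), hxlo, hxhi]
    have hcpos : (0:ℝ) < Real.cos x := by
      apply Real.cos_pos_of_mem_Ioo
      constructor <;> [linarith; nlinarith]
    have h14 : ((1.19:ℝ) ^ 2 - 1/4) = 1.1661 := by norm_num
    rw [h14, Real.tan_eq_sin_div_cos]
    have hrhs : (2 / Real.pi) * ((1.19:ℝ) / 1.1661) = 2.38 / (Real.pi * 1.1661) := by
      field_simp; ring
    rw [hrhs, div_lt_div_iff₀ (by positivity) hcpos]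
    nlinarith
  simpa [crackF, sub_pos] using key

lemma crackF_mono {a b : ℝ} (ha : 1 ≤ a) (hab : a < b) (hb : b < 3/2) :
    crackF a < crackF b := by
  have hpp : (0:ℝ) < Real.pi := Real.pi_pos
  have htan : Real.tan (Real.pi * (a - 1)) < Real.tan (Real.pi * (b - 1)) := by
    apply Real.strictMonoOn_tan
    · constructor <;> nlinarith
    · constructor <;> nlinarith
    · nlinarith
  have hda : (0:ℝ) < a ^ 2 - 1/4 := by nlinarith
  have hdb : (0:ℝ) < b ^ 2 - 1/4 := by nlinarith
  have hdiv : b / (b ^ 2 - 1/4) < a / (a ^ 2 - 1/4) := by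
    rw [div_lt_div_iff₀ hdb hda]
    nlinarith [mul_pos (sub_pos.mpr hab) (show (0:ℝ) < a * b + 1/4 by nlinarith)]
  have h2 : (2 / Real.pi) * (b / (b ^ 2 - 1/4)) < (2 / Real.pi) * (a / (a ^ 2 - 1/4)) :=
    mul_lt_mul_of_pos_left hdiv (by positivity)
  simp only [crackF]
  linarith

lemma crackF_cont : ContinuousOn crackF (Icc 1.18 1.19) := by
  have hpp : (0:ℝ) < Real.pi := Real.pi_pos
  intro a ha
  apply ContinuousWithinAt.sub
  · apply ContinuousAt.continuousWithinAt
    have hcos : Real.cos (Real.pi * (a - 1)) ≠ 0 := by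
      refine ne_of_gt (Real.cos_pos_of_mem_Ioo ⟨?_, ?_⟩)
      · have := ha.1; nlinarith
      · have := ha.2; nlinarith
    have hm : ContinuousAt (fun x : ℝ => Real.pi * (x - 1)) a := by fun_prop
    exact ContinuousAt.comp (g := Real.tan) (f := fun x : ℝ => Real.pi * (x - 1)) (Real.continuousAt_tan.2 hcos) hm
  · apply ContinuousAt.continuousWithinAt
    have hda : a ^ 2 - 1/4 ≠ 0 := by
      have := ha.1; have := ha.2; nlinarith
    exact continuousAt_const.mul (continuousAt_id.div (by fun_prop) hda)

lemma crack_tan_shift (a : ℝ) : Real.tan (Real.pi * a) = Real.tan (Real.pi * (a - 1)) := by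
  rw [show Real.pi * a = Real.pi * (a - 1) + Real.pi by ring, Real.tan_add_pi]

lemma crack_eq_iff {a : ℝ} :
    Real.tan (Real.pi * a) = (2 / Real.pi) * (a / (a ^ 2 - 1/4)) ↔ crackF a = 0 := by
  rw [crackF, crack_tan_shift a, sub_eq_zero]

/-- The unique solution `α₁` of `tan(πα) = (2/π) · α / (α² − 1/4)` in `(1, 3/2)` satisfies
`1.18 < α₁ < 1.19`. -/
theorem crack_exponent_one_bounds :
    (∃! α : ℝ, α ∈ Set.Ioo (1 : ℝ) (3/2) ∧
      Real.tan (Real.pi * α) = (2 / Real.pi) * (α / (α ^ 2 - 1/4))) ∧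
    ∀ α : ℝ, α ∈ Set.Ioo (1 : ℝ) (3/2) →
      Real.tan (Real.pi * α) = (2 / Real.pi) * (α / (α ^ 2 - 1/4)) →
      1.18 < α ∧ α < 1.19 := by
  have hbounds : ∀ α : ℝ, α ∈ Set.Ioo (1 : ℝ) (3/2) → crackF α = 0 →
      1.18 < α ∧ α < 1.19 := by
    intro α hα hF
    constructor
    · by_contra h
      push_neg at h
      rcases eq_or_lt_of_le h with h' | h'
      · rw [h'] at hF
        exact absurd hF (ne_of_lt crackF_neg)
      · have h1 := crackF_mono (le_of_lt hα.1) h' (by norm_num)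
        rw [hF] at h1
        linarith [crackF_neg]
    · by_contra h
      push_neg at h
      rcases eq_or_lt_of_le h with h' | h'
      · rw [← h'] at hF
        exact absurd hF (ne_of_gt crackF_pos)
      · have h1 := crackF_mono (by norm_num : (1:ℝ) ≤ 1.19) h' hα.2
        rw [hF] at h1
        linarith [crackF_pos]
  obtain ⟨c, hc, hFc⟩ := intermediate_value_Ioo (by norm_num : (1.18:ℝ) ≤ 1.19)
    crackF_cont ⟨crackF_neg, crackF_pos⟩
  have hcmem : c ∈ Set.Ioo (1 : ℝ) (3/2) := ⟨by linarith [hc.1], by linarith [hc.2]⟩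
  constructor
  · refine ⟨c, ⟨hcmem, crack_eq_iff.2 hFc⟩, ?_⟩
    rintro y ⟨hy, heq⟩
    have hFy := crack_eq_iff.1 heq
    rcases lt_trichotomy y c with h | h | h
    · have h1 := crackF_mono (le_of_lt hy.1) h hcmem.2
      rw [hFy, hFc] at h1
      exact absurd h1 (lt_irrefl 0)
    · exact h
    · have h1 := crackF_mono (le_of_lt hcmem.1) h hy.2
      rw [hFy, hFc] at h1
      exact absurd h1 (lt_irrefl 0)
  · intro α hα heq
    exact hbounds α hα (crack_eq_iff.1 heq)
end

section
/- Let γ̃ : ℝ → ℂ be twice differentiable at t with γ̃(t) ≠ 0 and γ̃′(t) ≠ 0, and let γ(s) = γ̃(s)² (complex squaring). Then γ′(t) ≠ 0 and the signed curvatures are related by 2|γ̃(t)| · [Im(γ″(t) · conj(γ′(t))) / |γ′(t)|³] = Im(γ̃″(t) · conj(γ̃′(t))) / |γ̃′(t)|³ + Im(γ̃′(t) · conj(γ̃(t))) / (|γ̃(t)|² · |γ̃′(t)|). -/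
open Topology ComplexConjugate

section SecondDerivativeOfSquare

variable {𝕜 𝔸 : Type*} [NontriviallyNormedField 𝕜] [NormedCommRing 𝔸] [NormedAlgebra 𝕜 𝔸]
  {f : 𝕜 → 𝔸} {x : 𝕜}

/-- `deriv g` vanishes wherever `g` is not differentiable, so a derivative that is nonzero and
continuous at `x` forces differentiability near `x`. -/
lemma ContinuousAt.eventually_differentiableAt_of_deriv_ne_zero {F : Type*} [NormedAddCommGroup F]
    [NormedSpace 𝕜 F] {g : 𝕜 → F} (hc : ContinuousAt (deriv g) x) (h : deriv g x ≠ 0) :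
    ∀ᶠ y in 𝓝 x, DifferentiableAt 𝕜 g y :=
  (hc.eventually_ne h).mono fun _ ↦ differentiableAt_of_deriv_ne_zero

lemma deriv_fun_sq_eventuallyEq (hf : ∀ᶠ y in 𝓝 x, DifferentiableAt 𝕜 f y) :
    deriv (fun y ↦ f y ^ 2) =ᶠ[𝓝 x] fun y ↦ 2 * f y * deriv f y :=
  hf.mono fun y hy ↦ by simp [deriv_fun_pow hy]

lemma deriv_deriv_fun_sq (hf : ∀ᶠ y in 𝓝 x, DifferentiableAt 𝕜 f y)
    (hf' : DifferentiableAt 𝕜 (deriv f) x) :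
    deriv (deriv fun y ↦ f y ^ 2) x = 2 * (deriv f x ^ 2 + f x * deriv (deriv f) x) := by
  rw [(deriv_fun_sq_eventuallyEq hf).deriv_eq,
    deriv_fun_mul (hf.self_of_nhds.const_mul 2) hf', deriv_const_mul _ hf.self_of_nhds]
  ring

end SecondDerivativeOfSquare

lemma Complex.im_sq_add_mul_mul_conj_mul_conj (a b c : ℂ) :
    ((b ^ 2 + a * c) * conj a * conj b).im
      = ‖a‖ ^ 2 * (c * conj b).im + ‖b‖ ^ 2 * (b * conj a).im := by
  rw [Complex.sq_norm, Complex.sq_norm]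
  simp only [pow_two, Complex.normSq_apply, Complex.mul_im, Complex.mul_re,
    Complex.add_re, Complex.add_im, Complex.conj_re, Complex.conj_im]
  ring

/-- The curvature identity at the level of the jet `(a, b, c) = (γ̃, γ̃′, γ̃″)(t)`, whose square
has jet `(a², 2ab, 2(b² + ac))`. -/
lemma two_norm_mul_curvature_of_sq_jet {a b c : ℂ} (ha : a ≠ 0) (hb : b ≠ 0) :
    2 * ‖a‖ * ((2 * (b ^ 2 + a * c) * conj (2 * a * b)).im / ‖2 * a * b‖ ^ 3) =
      (c * conj b).im / ‖b‖ ^ 3 + (b * conj a).im / (‖a‖ ^ 2 * ‖b‖) := by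
  have hnum : (2 * (b ^ 2 + a * c) * conj (2 * a * b)).im
      = 4 * ((b ^ 2 + a * c) * conj a * conj b).im := by
    rw [show 2 * (b ^ 2 + a * c) * conj (2 * a * b)
        = 4 * ((b ^ 2 + a * c) * conj a * conj b) by simp [map_mul, Complex.conj_ofNat]; ring]
    simp [Complex.mul_im]
  have ha' : 0 < ‖a‖ := norm_pos_iff.mpr ha
  have hb' : 0 < ‖b‖ := norm_pos_iff.mpr hb
  rw [hnum, Complex.im_sq_add_mul_mul_conj_mul_conj, norm_mul, norm_mul, Complex.norm_two]
  field_simp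
  ring

theorem curvature_under_squaring_general (γt : ℝ → ℂ) (t : ℝ)
    (h2 : DifferentiableAt ℝ (deriv γt) t)
    (h0 : γt t ≠ 0) (h0' : deriv γt t ≠ 0) :
    let γ : ℝ → ℂ := fun s => (γt s) ^ 2
    deriv γ t ≠ 0 ∧
      2 * ‖γt t‖ *
          ((deriv (deriv γ) t * (starRingEnd ℂ) (deriv γ t)).im / ‖deriv γ t‖ ^ 3) =
        (deriv (deriv γt) t * (starRingEnd ℂ) (deriv γt t)).im / ‖deriv γt t‖ ^ 3 +
          (deriv γt t * (starRingEnd ℂ) (γt t)).im /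
            (‖γt t‖ ^ 2 * ‖deriv γt t‖) := by
  intro γ
  have hdiff := h2.continuousAt.eventually_differentiableAt_of_deriv_ne_zero h0'
  have hd1 : deriv γ t = 2 * γt t * deriv γt t := (deriv_fun_sq_eventuallyEq hdiff).self_of_nhds
  have hd2 := deriv_deriv_fun_sq hdiff h2
  refine ⟨hd1 ▸ mul_ne_zero (mul_ne_zero two_ne_zero h0) h0', ?_⟩
  rw [hd1, hd2]
  exact two_norm_mul_curvature_of_sq_jet h0 h0'

/-- Let `γ̃ : ℝ → ℂ` be twice differentiable at `t` with `γ̃(t) ≠ 0` and `γ̃′(t) ≠ 0`, and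
let `γ(s) = γ̃(s)²`. Then `γ′(t) ≠ 0` and the signed curvatures
`κ = Im(γ″ conj γ′)/|γ′|³` satisfy
`2|γ̃(t)| κ_γ(t) = κ_γ̃(t) + Im(γ̃′(t) conj γ̃(t)) / (|γ̃(t)|² |γ̃′(t)|)`. -/
theorem curvature_under_squaring (γt : ℝ → ℂ) (t : ℝ)
    (h1 : DifferentiableAt ℝ γt t) (h2 : DifferentiableAt ℝ (deriv γt) t)
    (h0 : γt t ≠ 0) (h0' : deriv γt t ≠ 0) :
    let γ : ℝ → ℂ := fun s => (γt s) ^ 2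
    deriv γ t ≠ 0 ∧
      2 * ‖γt t‖ *
          ((deriv (deriv γ) t * (starRingEnd ℂ) (deriv γ t)).im / ‖deriv γ t‖ ^ 3) =
        (deriv (deriv γt) t * (starRingEnd ℂ) (deriv γt t)).im / ‖deriv γt t‖ ^ 3 +
          (deriv γt t * (starRingEnd ℂ) (γt t)).im /
            (‖γt t‖ ^ 2 * ‖deriv γt t‖) :=
  curvature_under_squaring_general γt t h2 h0 h0'
end

section
/- Let λ > 0, let f ∈ C¹([0, 1)) ∩ C³((0, 1)) with f(0) = f′(0) = 0 and t f″(t) → 0 as t → 0⁺, and let Γ = {(−t, f(t)) : 0 ≤ t < 1} ⊆ ℝ². Let B₁ be the open unit disc and suppose u : B₁ \ Γ → ℝ is differentiable and the pair (u, Γ) minimizes the Mumford–Shah energy J(v, Γ′) = ∫_{B₁ \ Γ′} ‖∇v‖² dx dy + λ² (π/2) 𝓗¹(Γ′) among all pairs (v, Γ′) with Γ′ ⊆ closure(B₁) closed, 𝓗¹(Γ′) < ∞, v differentiable on B₁ \ Γ′, and v = u on ∂B₁ away from Γ ∪ Γ′. If the rescaled functions t ↦ f(ρt) / max_{0 < τ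 ≤ ρ} |f(τ)| converge, as ρ → 0⁺, in C¹ on compact subsets of [0, 1), to the zero function, then f decays faster than any power at the crack-tip: for every M > 0, lim_{t → 0⁺} t^{−M} f(t) = 0. -/
open MeasureTheory Filter
open scoped ENNReal

/-!
Write `m ρ = sup_{(0,ρ]} |f|`. Uniform smallness of `f (ρ t) / m ρ` on `[0, 1/2]` says
`m (ρ/2) ≤ ε m ρ` for small `ρ`, for every `ε > 0`. Taking `ε = 2^{-p}` and iterating along
`ρ₁ / 2ⁿ` gives `m t ≤ C t^p` near `0`, for every `p`, so `t^{-M} f t = O(t)`.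
-/

open Set Topology

noncomputable def supAbsIoc (f : ℝ → ℝ) (ρ : ℝ) : ℝ :=
  sSup ((fun τ => |f τ|) '' Ioc 0 ρ)

section SupAbsIoc

variable {f : ℝ → ℝ} {ρ : ℝ}

lemma supAbsIoc_nonneg : 0 ≤ supAbsIoc f ρ :=
  Real.sSup_nonneg (by rintro _ ⟨τ, -, rfl⟩; exact abs_nonneg _)

lemma bddAbove_abs_image_Ioc (hf : ContinuousOn f (Ico 0 1)) (hρ : ρ < 1) :
    BddAbove ((fun τ => |f τ|) '' Ioc 0 ρ) :=
  have hsub : Icc 0 ρ ⊆ Ico 0 1 := fun _ hx => ⟨hx.1, hx.2.trans_lt hρ⟩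
  ((isCompact_Icc.image_of_continuousOn (hf.mono hsub).abs).bddAbove).mono
    (image_mono Ioc_subset_Icc_self)

lemma abs_le_supAbsIoc (hf : ContinuousOn f (Ico 0 1)) (hρ : ρ < 1) {s : ℝ}
    (hs : s ∈ Ioc 0 ρ) : |f s| ≤ supAbsIoc f ρ :=
  le_csSup (bddAbove_abs_image_Ioc hf hρ) ⟨s, hs, rfl⟩

lemma monotoneOn_supAbsIoc (hf : ContinuousOn f (Ico 0 1)) :
    MonotoneOn (supAbsIoc f) (Ioo 0 1) := fun _ hr _ hr' hle =>
  csSup_le_csSup (bddAbove_abs_image_Ioc hf hr'.2) ((nonempty_Ioc.2 hr.1).image _)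
    (image_mono (Ioc_subset_Ioc_right hle))

lemma eventually_supAbsIoc_half_le (hf : ContinuousOn f (Ico 0 1))
    (hconv : TendstoUniformlyOn (fun ρ t => f (ρ * t) / supAbsIoc f ρ) (fun _ => 0)
      (𝓝[>] 0) (Icc 0 (1 / 2)))
    {ε : ℝ} (hε : 0 < ε) :
    ∀ᶠ ρ in 𝓝[>] 0, supAbsIoc f (ρ / 2) ≤ ε * supAbsIoc f ρ := by
  filter_upwards [Metric.tendstoUniformlyOn_iff.1 hconv ε hε, Ioo_mem_nhdsGT zero_lt_one]
    with ρ hsmall hρ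
  refine csSup_le ((nonempty_Ioc.2 (half_pos hρ.1)).image _) ?_
  rintro _ ⟨s, hs, rfl⟩
  have hst : ρ * (s / ρ) = s := mul_div_cancel₀ s hρ.1.ne'
  have hs_le : |f s| ≤ supAbsIoc f ρ :=
    abs_le_supAbsIoc hf hρ.2 ⟨hs.1, by linarith [hs.2, hρ.1]⟩
  rcases supAbsIoc_nonneg.eq_or_lt with hzero | hpos
  · -- the quotient is junk (`x / 0 = 0`) here, but then `f = 0` on `(0, ρ]`
    rw [← hzero] at hs_le ⊢
    simpa using hs_le
  · have h := hsmall (s / ρ) ⟨div_nonneg hs.1.le hρ.1.le, by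
      rw [div_le_iff₀ hρ.1]; linarith [hs.2]⟩
    rw [Real.dist_eq, zero_sub, abs_neg, hst, abs_div, abs_of_pos hpos, div_lt_iff₀ hpos] at h
    exact h.le

end SupAbsIoc

lemma two_pow_rpow_mul_le_of_half {m : ℝ → ℝ} {p ρ₁ : ℝ} (hρ₁ : 0 < ρ₁)
    (hhalf : ∀ ρ ∈ Ioc 0 ρ₁, 2 ^ p * m (ρ / 2) ≤ m ρ) (n : ℕ) :
    ((2 : ℝ) ^ n) ^ p * m (ρ₁ / 2 ^ n) ≤ m ρ₁ := by
  induction n with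
  | zero => simp
  | succ n ih =>
    have hmem : ρ₁ / 2 ^ n ∈ Ioc 0 ρ₁ :=
      ⟨by positivity, div_le_self hρ₁.le (one_le_pow₀ one_le_two)⟩
    calc ((2 : ℝ) ^ (n + 1)) ^ p * m (ρ₁ / 2 ^ (n + 1))
        = ((2 : ℝ) ^ n) ^ p * (2 ^ p * m (ρ₁ / 2 ^ n / 2)) := by
          rw [pow_succ, Real.mul_rpow (by positivity) zero_le_two, div_div, ← pow_succ]
          ring
      _ ≤ ((2 : ℝ) ^ n) ^ p * m (ρ₁ / 2 ^ n) := by gcongr; exact hhalf _ hmem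
      _ ≤ m ρ₁ := ih

lemma le_mul_rpow_of_half {m : ℝ → ℝ} {p ρ₁ : ℝ} (hp : 0 ≤ p) (hρ₁ : 0 < ρ₁)
    (hmono : MonotoneOn m (Ioc 0 ρ₁)) (hm : 0 ≤ m ρ₁)
    (hhalf : ∀ ρ ∈ Ioc 0 ρ₁, 2 ^ p * m (ρ / 2) ≤ m ρ) {t : ℝ}
    (ht : t ∈ Ioc 0 ρ₁) :
    m t ≤ m ρ₁ * (2 / ρ₁) ^ p * t ^ p := by
  obtain ⟨n, hn, hn'⟩ := exists_nat_pow_near ((one_le_div ht.1).2 ht.2) one_lt_two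
  have hpow : (0 : ℝ) < 2 ^ n := by positivity
  have ht_le : t ≤ ρ₁ / 2 ^ n := by
    rwa [le_div_iff₀ hpow, mul_comm, ← le_div_iff₀ ht.1]
  have hinv_le : (2 ^ n : ℝ)⁻¹ ≤ 2 / ρ₁ * t := by
    rw [pow_succ, div_lt_iff₀ ht.1] at hn'
    rw [inv_le_iff_one_le_mul₀ hpow]
    nlinarith [div_mul_cancel₀ (2 : ℝ) hρ₁.ne']
  calc m t ≤ m (ρ₁ / 2 ^ n) :=
        hmono ht ⟨by positivity, div_le_self hρ₁.le (one_le_pow₀ one_le_two)⟩ ht_le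
    _ ≤ m ρ₁ / ((2 : ℝ) ^ n) ^ p :=
        (le_div_iff₀' (by positivity)).2 (two_pow_rpow_mul_le_of_half hρ₁ hhalf n)
    _ = m ρ₁ * ((2 : ℝ) ^ n)⁻¹ ^ p := by rw [Real.inv_rpow hpow.le, div_eq_mul_inv]
    _ ≤ m ρ₁ * (2 / ρ₁ * t) ^ p := by gcongr
    _ = m ρ₁ * (2 / ρ₁) ^ p * t ^ p := by
        rw [Real.mul_rpow (by positivity) ht.1.le]; ring

lemma eventually_supAbsIoc_le_rpow {f : ℝ → ℝ} (hf : ContinuousOn f (Ico 0 1))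
    (hconv : TendstoUniformlyOn (fun ρ t => f (ρ * t) / supAbsIoc f ρ) (fun _ => 0)
      (𝓝[>] 0) (Icc 0 (1 / 2)))
    {p : ℝ} (hp : 0 ≤ p) : ∃ C, ∀ᶠ t in 𝓝[>] 0, supAbsIoc f t ≤ C * t ^ p := by
  obtain ⟨δ, hδ, hhalf⟩ := mem_nhdsGT_iff_exists_Ioo_subset.1
    (eventually_supAbsIoc_half_le hf hconv (inv_pos.2 (Real.rpow_pos_of_pos two_pos p)))
  set ρ₁ := min (δ / 2) (1 / 2)
  have hρ₁ : 0 < ρ₁ := lt_min (half_pos hδ) one_half_pos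
  have hρ₁δ : ρ₁ < δ := (min_le_left _ _).trans_lt (half_lt_self hδ)
  have hρ₁1 : ρ₁ < 1 := (min_le_right _ _).trans_lt one_half_lt_one
  refine ⟨supAbsIoc f ρ₁ * (2 / ρ₁) ^ p, ?_⟩
  filter_upwards [Ioc_mem_nhdsGT hρ₁] with t ht
  refine le_mul_rpow_of_half hp hρ₁ ((monotoneOn_supAbsIoc hf).mono
    fun x hx => ⟨hx.1, hx.2.trans_lt hρ₁1⟩) supAbsIoc_nonneg (fun ρ hρ => ?_) ht
  have h := hhalf ⟨hρ.1, hρ.2.trans_lt hρ₁δ⟩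
  rwa [← le_div_iff₀' (Real.rpow_pos_of_pos two_pos p), div_eq_inv_mul (supAbsIoc f ρ)]

theorem crack_tip_infinite_order_decay_general (f : ℝ → ℝ)
    (hf1 : ContDiffOn ℝ 1 f (Set.Ico 0 1))
    (hconv : ∀ b : ℝ, 0 < b → b < 1 →
      TendstoUniformlyOn
        (fun ρ t => f (ρ * t) / sSup ((fun τ => |f τ|) '' Set.Ioc 0 ρ)) (fun _ => 0)
        (nhdsWithin 0 (Set.Ioi 0)) (Set.Icc 0 b) ∧
      TendstoUniformlyOn
        (fun ρ t => deriv (fun s => f (ρ * s) / sSup ((fun τ => |f τ|) '' Set.Ioc 0 ρ)) t)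
        (fun _ => 0) (nhdsWithin 0 (Set.Ioi 0)) (Set.Icc 0 b)) :
    ∀ M : ℝ, 0 < M →
      Tendsto (fun t : ℝ => t ^ (-M) * f t) (nhdsWithin 0 (Set.Ioi 0)) (nhds 0) := by
  intro M hM
  have hf := hf1.continuousOn
  obtain ⟨C, hC⟩ := eventually_supAbsIoc_le_rpow hf
    (hconv (1 / 2) one_half_pos one_half_lt_one).1 (p := M + 1) (by linarith)
  have hlin : Tendsto (fun t : ℝ => C * t) (𝓝[>] 0) (𝓝 0) := by
    simpa using ((continuous_const_mul C).tendsto 0).mono_left nhdsWithin_le_nhds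
  refine squeeze_zero_norm' ?_ hlin
  filter_upwards [hC, Ioo_mem_nhdsGT zero_lt_one] with t hCt ht
  have htM : 0 < t ^ (-M) := Real.rpow_pos_of_pos ht.1 _
  calc ‖t ^ (-M) * f t‖ = t ^ (-M) * |f t| := by
        rw [Real.norm_eq_abs, abs_mul, abs_of_pos htM]
    _ ≤ t ^ (-M) * (C * t ^ (M + 1)) := by
        gcongr
        exact (abs_le_supAbsIoc hf ht.2 ⟨ht.1, le_rfl⟩).trans hCt
    _ = C * t := by
        rw [Real.rpow_add ht.1, Real.rpow_one, Real.rpow_neg ht.1.le]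
        field_simp [(Real.rpow_pos_of_pos ht.1 M).ne']

/-- Degenerate blow-up case at the crack-tip of a Mumford–Shah minimizer. With the same
setting as in the crack-tip asymptotics theorem (`λ > 0`, `f ∈ C¹([0,1)) ∩ C³((0,1))`,
`f(0) = f′(0) = 0`, `t f″(t) → 0`, `Γ = {(−t, f(t)) : 0 ≤ t < 1}`, `(u, Γ)` a Mumford–Shah
minimizer under its own boundary values), if the rescalings `t ↦ f(ρt)/max_{0<τ≤ρ}|f(τ)|`
converge in `C¹` on compact subsets of `[0,1)` to the zero function as `ρ → 0⁺`, then `f`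
decays faster than any power at the crack-tip: for every `M > 0`,
`lim_{t→0⁺} t^{−M} f(t) = 0`. -/
theorem crack_tip_infinite_order_decay (lam : ℝ) (hlam : 0 < lam) (f : ℝ → ℝ)
    (hf1 : ContDiffOn ℝ 1 f (Set.Ico 0 1))
    (hf3 : ContDiffOn ℝ 3 f (Set.Ioo 0 1))
    (hf0 : f 0 = 0)
    (hf0' : derivWithin f (Set.Ico 0 1) 0 = 0)
    (hf'' : Tendsto (fun t => t * deriv (deriv f) t) (nhdsWithin 0 (Set.Ioi 0)) (nhds 0))
    (Γ : Set ℂ)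
    (hΓ : Γ = {z : ℂ | ∃ t : ℝ, 0 ≤ t ∧ t < 1 ∧ z = (-t : ℝ) + (f t : ℝ) * Complex.I})
    (u : ℂ → ℝ)
    (hu : DifferentiableOn ℝ u (Metric.ball (0 : ℂ) 1 \ Γ))
    (hmin : ∀ (v : ℂ → ℝ) (Γ' : Set ℂ),
      Γ' ⊆ closure (Metric.ball (0 : ℂ) 1) → IsClosed Γ' → μH[1] Γ' < ⊤ →
      DifferentiableOn ℝ v (Metric.ball (0 : ℂ) 1 \ Γ') →
      (∀ z ∈ Metric.sphere (0 : ℂ) 1, z ∉ Γ ∪ Γ' → v z = u z) →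
      (∫⁻ z in (Metric.ball (0 : ℂ) 1 \ Γ), (‖gradient u z‖₊ : ℝ≥0∞) ^ 2 ∂volume) +
          ENNReal.ofReal (lam ^ 2 * (Real.pi / 2)) * μH[1] Γ ≤
        (∫⁻ z in (Metric.ball (0 : ℂ) 1 \ Γ'), (‖gradient v z‖₊ : ℝ≥0∞) ^ 2 ∂volume) +
          ENNReal.ofReal (lam ^ 2 * (Real.pi / 2)) * μH[1] Γ')
    (hconv : ∀ b : ℝ, 0 < b → b < 1 →
      TendstoUniformlyOn
        (fun ρ t => f (ρ * t) / sSup ((fun τ => |f τ|) '' Set.Ioc 0 ρ)) (fun _ => 0)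
        (nhdsWithin 0 (Set.Ioi 0)) (Set.Icc 0 b) ∧
      TendstoUniformlyOn
        (fun ρ t => deriv (fun s => f (ρ * s) / sSup ((fun τ => |f τ|) '' Set.Ioc 0 ρ)) t)
        (fun _ => 0) (nhdsWithin 0 (Set.Ioi 0)) (Set.Icc 0 b)) :
    ∀ M : ℝ, 0 < M →
      Tendsto (fun t : ℝ => t ^ (-M) * f t) (nhdsWithin 0 (Set.Ioi 0)) (nhds 0) :=
  crack_tip_infinite_order_decay_general f hf1 hconv
end
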